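/- arXiv:1304.0534 — 2 statements merged into one kernel-verified Lean document; each statement's English description precedes it below -/
import Mathlib

section
/- For every s ∈ [0,T] and every function u on [0,T] with u, u', u'' absolutely continuous, u''' ∈ L²[0,T], and u(0) = u'(0) = 0, the reproducing property holds: u(s) = Σ_{i=0}^{2} u^{(i)}(0)·r_s^{(i)}(0) + ∫₀^T u'''(t)·(∂³/∂t³)r_s(t) dt. -/
/-!
Integrating by parts twice against the absolutely continuous functions `u₁` and `u₂` gives
Taylor's formula with integral remainder,
`u s = u 0 + u₁ 0 * s + u₂ 0 * s² / 2 + ∫₀ˢ u₃ t * (s - t)² / 2 dt`.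
The kernel is a quintic on `t ≤ s` and a quadratic on `t > s`, glued to second order at `t = s`,
so that `∂ₜ³ r s t = (s - t)² / 2` on `t ≤ s` and `0` beyond, while `∂ₜ² r s 0 = s² / 2`:
the right-hand side of the reproducing identity is exactly this Taylor formula.
-/

open MeasureTheory intervalIntegral

/-- Kernel of `W³₂[0,T]`. -/
noncomputable def r (s t : ℝ) : ℝ :=
  if t ≤ s then
    (1/4)*s^2*t^2 + (1/12)*s^2*t^3 - (1/24)*s*t^4 + (1/120)*t^5
  else
    (1/4)*s^2*t^2 + (1/12)*s^3*t^2 - (1/24)*t*s^4 + (1/120)*s^5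

open Set

section IntegralRepresentation

variable {a b : ℝ} {p p' v g : ℝ → ℝ}

theorem absolutelyContinuousOnInterval_const_add_integral (c : ℝ)
    (hg : IntervalIntegrable g volume a b) :
    AbsolutelyContinuousOnInterval (fun x => c + ∫ t in a..x, g t) a b :=
  contDiffOn_const.absolutelyContinuousOnInterval.add
    (hg.absolutelyContinuousOnInterval_intervalIntegral left_mem_uIcc)

theorem continuousOn_of_eq_add_integral
    (hv : ∀ x ∈ uIcc a b, v x = v a + ∫ t in a..x, g t) (hg : IntervalIntegrable g volume a b) :
    ContinuousOn v (uIcc a b) :=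
  (absolutelyContinuousOnInterval_const_add_integral (v a) hg).continuousOn.congr hv

theorem integral_deriv_mul_eq_sub_of_eq_add_integral
    (hp : ∀ x, HasDerivAt p (p' x) x) (hp' : Continuous p')
    (hv : ∀ x ∈ uIcc a b, v x = v a + ∫ t in a..x, g t) (hg : IntervalIntegrable g volume a b) :
    ∫ x in a..b, p' x * v x = p b * v b - p a * v a - ∫ x in a..b, p x * g x := by
  set V : ℝ → ℝ := fun x => v a + ∫ t in a..x, g t
  have hV : AbsolutelyContinuousOnInterval V a b :=
    absolutelyContinuousOnInterval_const_add_integral (v a) hg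
  have hderiv_p : deriv p = p' := funext fun x => (hp x).deriv
  have hp_ac : AbsolutelyContinuousOnInterval p a b :=
    (contDiff_one_iff_deriv.2 ⟨fun x => (hp x).differentiableAt, hderiv_p ▸ hp'⟩).contDiffOn
      |>.absolutelyContinuousOnInterval
  have hderiv_V : ∫ x in a..b, p x * deriv V x = ∫ x in a..b, p x * g x := by
    refine integral_congr_ae ?_
    filter_upwards [hg.ae_hasDerivAt_integral] with x hx hx'
    rw [((hx (uIoc_subset_uIcc hx') a left_mem_uIcc).const_add (v a)).deriv]
  have hvV : ∫ x in a..b, p' x * v x = ∫ x in a..b, p' x * V x :=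
    integral_congr fun x hx => by rw [hv x hx]
  rw [hvV, hv b right_mem_uIcc, ← hderiv_V, hp_ac.integral_mul_deriv_eq_deriv_mul hV, hderiv_p]
  simp [V]

end IntegralRepresentation

theorem taylor_integral_remainder_two_of_eq_add_integral {a b : ℝ} {u u₁ u₂ u₃ : ℝ → ℝ}
    (hu : ∀ x ∈ uIcc a b, u x = u a + ∫ t in a..x, u₁ t)
    (hu₁ : ∀ x ∈ uIcc a b, u₁ x = u₁ a + ∫ t in a..x, u₂ t)
    (hu₂ : ∀ x ∈ uIcc a b, u₂ x = u₂ a + ∫ t in a..x, u₃ t)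
    (hu₃ : IntervalIntegrable u₃ volume a b) :
    u b = u a + u₁ a * (b - a) + u₂ a * ((b - a) ^ 2 / 2)
      + ∫ t in a..b, u₃ t * ((b - t) ^ 2 / 2) := by
  -- Both weights vanish at `b`, so only the boundary terms at `a` survive.
  have parts₁ := integral_deriv_mul_eq_sub_of_eq_add_integral (p := fun x => x - b)
    (fun x => (hasDerivAt_id x).sub_const b) continuous_const hu₁
    (continuousOn_of_eq_add_integral hu₂ hu₃).intervalIntegrable
  have parts₂ := integral_deriv_mul_eq_sub_of_eq_add_integral (p := fun x => -((b - x) ^ 2 / 2))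
    (p' := fun x => b - x)
    (fun x => ((((hasDerivAt_id' x).const_sub b).fun_pow 2).div_const 2).fun_neg.congr_deriv
      (by ring)) (by fun_prop) hu₂ hu₃
  simp only [one_mul, sub_self, zero_mul, zero_sub] at parts₁ parts₂
  have flip₁ : ∫ x in a..b, (x - b) * u₂ x = -∫ x in a..b, (b - x) * u₂ x := by
    rw [← intervalIntegral.integral_neg]; congr 1; ext x; ring
  have flip₂ : ∫ x in a..b, -((b - x) ^ 2 / 2) * u₃ x
      = -∫ x in a..b, u₃ x * ((b - x) ^ 2 / 2) := by
    rw [← intervalIntegral.integral_neg]; congr 1; ext x; ring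
  rw [hu b right_mem_uIcc, parts₁, flip₁, parts₂, flip₂]
  ring

open Topology in
theorem deriv_ite_le {f g : ℝ → ℝ} {s : ℝ} (hf : Differentiable ℝ f) (hg : Differentiable ℝ g)
    (hfg : f s = g s) (hfg' : deriv f s = deriv g s) :
    deriv (fun t => if t ≤ s then f t else g t) =
      fun t => if t ≤ s then deriv f t else deriv g t := by
  funext t
  rcases lt_trichotomy t s with hts | rfl | hst
  · have hf_near : (fun t => if t ≤ s then f t else g t) =ᶠ[𝓝 t] f := by
      filter_upwards [eventually_lt_nhds hts] with x hx using if_pos hx.le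
    rw [hf_near.deriv_eq, if_pos hts.le]
  · have hleft : HasDerivWithinAt (fun x => if x ≤ t then f x else g x) (deriv f t) (Iic t) t :=
      (hf t).hasDerivAt.hasDerivWithinAt.congr (fun y hy => if_pos hy) (if_pos le_rfl)
    have hright : HasDerivWithinAt (fun x => if x ≤ t then f x else g x) (deriv f t) (Ioi t) t :=
      hfg' ▸ (hg t).hasDerivAt.hasDerivWithinAt.congr (fun y hy => if_neg (not_le.2 hy))
        (by rw [if_pos le_rfl, hfg])
    have hboth := hleft.union hright
    rw [Iic_union_Ioi, hasDerivWithinAt_univ] at hboth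
    rw [hboth.deriv, if_pos le_rfl]
  · have hg_near : (fun t => if t ≤ s then f t else g t) =ᶠ[𝓝 t] g := by
      filter_upwards [eventually_gt_nhds hst] with x hx using if_neg (not_le.2 hx)
    rw [hg_near.deriv_eq, if_neg (not_le.2 hst)]

theorem deriv_r (s : ℝ) : deriv (fun t => r s t) = fun t => if t ≤ s then
      (1/2)*s^2*t + (1/4)*s^2*t^2 - (1/6)*s*t^3 + (1/24)*t^4
    else (1/2)*s^2*t + (1/6)*s^3*t - (1/24)*s^4 := by
  simp only [r]
  rw [deriv_ite_le (by fun_prop) (by fun_prop) (by ring)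
    (by simp (disch := fun_prop) only [deriv_fun_add, deriv_fun_sub, deriv_fun_mul, deriv_const',
      deriv_fun_pow, deriv_id'', deriv_const_mul_id']; ring)]
  ext t
  simp (disch := fun_prop) only [deriv_fun_add, deriv_fun_sub, deriv_fun_mul, deriv_const',
    deriv_fun_pow, deriv_id'', deriv_const_mul_id']
  split_ifs <;> ring

theorem deriv_deriv_r (s : ℝ) : deriv (deriv (fun t => r s t)) = fun t => if t ≤ s then
      (1/2)*s^2 + (1/2)*s^2*t - (1/2)*s*t^2 + (1/6)*t^3
    else (1/2)*s^2 + (1/6)*s^3 := by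
  rw [deriv_r, deriv_ite_le (by fun_prop) (by fun_prop) (by ring)
    (by simp (disch := fun_prop) only [deriv_fun_add, deriv_fun_sub, deriv_fun_mul, deriv_const',
      deriv_fun_pow, deriv_id'', deriv_const_mul_id']; ring)]
  ext t
  simp (disch := fun_prop) only [deriv_fun_add, deriv_fun_sub, deriv_fun_mul, deriv_const',
    deriv_fun_pow, deriv_id'', deriv_const_mul_id']
  split_ifs <;> ring

theorem deriv_deriv_deriv_r (s : ℝ) :
    deriv (deriv (deriv (fun t => r s t))) = fun t => if t ≤ s then (s - t) ^ 2 / 2 else 0 := by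
  rw [deriv_deriv_r, deriv_ite_le (by fun_prop) (by fun_prop) (by ring)
    (by simp (disch := fun_prop) only [deriv_fun_add, deriv_fun_sub, deriv_fun_mul, deriv_const',
      deriv_fun_pow, deriv_id'', deriv_const_mul_id']; ring)]
  ext t
  simp (disch := fun_prop) only [deriv_fun_add, deriv_fun_sub, deriv_fun_mul, deriv_const',
    deriv_fun_pow, deriv_id'', deriv_const_mul_id']
  split_ifs <;> ring

theorem stmt_6_general (T : ℝ) (u u₁ u₂ u₃ : ℝ → ℝ)
    (hAC : ∀ x ∈ Set.Icc (0:ℝ) T, u x = u 0 + ∫ t in (0:ℝ)..x, u₁ t)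
    (hAC1 : ∀ x ∈ Set.Icc (0:ℝ) T, u₁ x = u₁ 0 + ∫ t in (0:ℝ)..x, u₂ t)
    (hAC2 : ∀ x ∈ Set.Icc (0:ℝ) T, u₂ x = u₂ 0 + ∫ t in (0:ℝ)..x, u₃ t)
    (hL2 : MemLp u₃ 2 (volume.restrict (Set.Icc (0:ℝ) T)))
    (h0 : u 0 = 0) (h1 : u₁ 0 = 0)
    (s : ℝ) (hs : s ∈ Set.Icc (0:ℝ) T) :
    u s = u 0 * r s 0 + u₁ 0 * deriv (fun t => r s t) 0
        + u₂ 0 * deriv (deriv (fun t => r s t)) 0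
        + ∫ t in (0:ℝ)..T, u₃ t * deriv (deriv (deriv (fun t => r s t))) t := by
  have hsub : uIcc 0 s ⊆ Icc 0 T := uIcc_of_le hs.1 ▸ Icc_subset_Icc_right hs.2
  have hu₃ : IntervalIntegrable u₃ volume 0 s :=
    (IntegrableOn.mono_set (hL2.integrable one_le_two) hsub).intervalIntegrable
  have htruncate : ∫ t in (0:ℝ)..T, u₃ t * (if t ≤ s then (s - t) ^ 2 / 2 else 0)
      = ∫ t in (0:ℝ)..s, u₃ t * ((s - t) ^ 2 / 2) := by
    simpa [indicator_apply, mul_ite] using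
      intervalIntegral.integral_indicator (f := fun t => u₃ t * ((s - t) ^ 2 / 2)) (μ := volume) hs
  have taylor := taylor_integral_remainder_two_of_eq_add_integral (fun x hx => hAC x (hsub hx))
    (fun x hx => hAC1 x (hsub hx)) (fun x hx => hAC2 x (hsub hx)) hu₃
  rw [taylor, deriv_deriv_deriv_r, deriv_deriv_r, h0, h1]
  simp only [if_pos hs.1, htruncate]
  ring

/-- Reproducing property in `W³₂[0,T]`: for `u` with `u, u', u''` absolutely
continuous (expressed via integral representations with derivatives
`u₁, u₂, u₃`), `u''' ∈ L²[0,T]` and `u(0) = u'(0) = 0`,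
`u(s) = Σ_{i=0}^{2} u⁽ⁱ⁾(0) · r_s⁽ⁱ⁾(0) + ∫₀ᵀ u'''(t) · ∂ₜ³ r_s(t) dt`. -/
theorem stmt_6 (T : ℝ) (hT : 0 < T) (u u₁ u₂ u₃ : ℝ → ℝ)
    (hAC : ∀ x ∈ Set.Icc (0:ℝ) T, u x = u 0 + ∫ t in (0:ℝ)..x, u₁ t)
    (hAC1 : ∀ x ∈ Set.Icc (0:ℝ) T, u₁ x = u₁ 0 + ∫ t in (0:ℝ)..x, u₂ t)
    (hAC2 : ∀ x ∈ Set.Icc (0:ℝ) T, u₂ x = u₂ 0 + ∫ t in (0:ℝ)..x, u₃ t)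
    (hL2 : MemLp u₃ 2 (volume.restrict (Set.Icc (0:ℝ) T)))
    (h0 : u 0 = 0) (h1 : u₁ 0 = 0)
    (s : ℝ) (hs : s ∈ Set.Icc (0:ℝ) T) :
    u s = u 0 * r s 0 + u₁ 0 * deriv (fun t => r s t) 0
        + u₂ 0 * deriv (deriv (fun t => r s t)) 0
        + ∫ t in (0:ℝ)..T, u₃ t * deriv (deriv (deriv (fun t => r s t))) t :=
  stmt_6_general T u u₁ u₂ u₃ hAC hAC1 hAC2 hL2 h0 h1 s hs
end

section
/- Let W be a reproducing kernel Hilbert space of functions on Ω, L : W → Ŵ an injective bounded linear operator into another RKHS Ŵ with kernel G, and {(xᵢ,tᵢ)} a dense sequence in Ω. Define Ψᵢ = L*G_{(xᵢ,tᵢ)}. If ⟨u, Ψᵢ⟩_W = 0 for all i and Lu is continuous on Ω, then u = 0; hence the system {Ψᵢ} is complete in W. -/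
/-! The reproducing property turns `⟪u, L* G_p⟫` into the value `(L u)(p)`, so `L u` vanishes on
the dense set of points `pᵢ`; being continuous it vanishes everywhere, and injectivity of the
evaluation map and of `L` give `u = 0`. -/

open ContinuousLinearMap

theorem inner_adjoint_kernel_eq_eval {𝕜 Ω W W' : Type*} [RCLike 𝕜]
    [NormedAddCommGroup W] [InnerProductSpace 𝕜 W] [CompleteSpace W]
    [NormedAddCommGroup W'] [InnerProductSpace 𝕜 W'] [CompleteSpace W']
    (ev : W' →ₗ[𝕜] (Ω → 𝕜)) (G : Ω → W') (hrep : ∀ (g : W') (p : Ω), inner 𝕜 g (G p) = ev g p)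
    (L : W →L[𝕜] W') (u : W) (x : Ω) :
    inner 𝕜 u (adjoint L (G x)) = ev (L u) x := by
  rw [adjoint_inner_right, hrep]

/-- Completeness of the system `Ψᵢ = L* G_{(xᵢ,tᵢ)}` (Theorem 3.1): if
`W` is an RKHS on `Ω`, `L : W → Ŵ` is an injective bounded linear operator
into an RKHS `Ŵ` with kernel `G` (realized by an injective evaluation map
`ev`), `(pᵢ)` is a dense sequence of points in `Ω`, and `u ∈ W` satisfies
`⟪u, Ψᵢ⟫ = 0` for all `i` while `Lu` is continuous as a function on `Ω`,
then `u = 0`; hence `{Ψᵢ}` is complete in `W`. -/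
theorem stmt_14 {Ω : Type*} [TopologicalSpace Ω] {W W' : Type*}
    [NormedAddCommGroup W] [InnerProductSpace ℝ W] [CompleteSpace W]
    [NormedAddCommGroup W'] [InnerProductSpace ℝ W'] [CompleteSpace W']
    (ev : W' →ₗ[ℝ] (Ω → ℝ)) (hev : Function.Injective ev)
    (G : Ω → W') (hrep : ∀ (g : W') (p : Ω), inner ℝ g (G p) = ev g p)
    (L : W →L[ℝ] W') (hL : Function.Injective L)
    (p : ℕ → Ω) (hp : DenseRange p)
    (Ψ : ℕ → W) (hΨ : ∀ i, Ψ i = ContinuousLinearMap.adjoint L (G (p i)))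
    (u : W) (horth : ∀ i, (inner ℝ u (Ψ i) : ℝ) = 0)
    (hcont : Continuous (ev (L u))) :
    u = 0 := by
  have hvanish : ∀ i, ev (L u) (p i) = 0 := fun i => by
    rw [← inner_adjoint_kernel_eq_eval ev G hrep, ← hΨ, horth]
  have hLu_eval : ev (L u) = ev 0 := by
    rw [map_zero]
    exact hp.equalizer hcont continuous_const (funext hvanish)
  have hLu : L u = L 0 := by rw [hev hLu_eval, map_zero]
  exact hL hLu
end
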